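/- arXiv:1510.00404 — 4 statements merged into one kernel-verified Lean document; each statement's English description precedes it below -/
import Mathlib

section
/- The hard-core scattering integral of Baker and Gammel satisfies ∫_0^∞ ((sin t - t cos t)/t^3)^2 dt = π/15; equivalently, the function S(x) = ∫_0^x ((sin t)/t^3 - (cos t)/t^2)^2 dt tends to π/15 as x → ∞. -/
open Filter Topology Real MeasureTheory Set Function

/-!
Since `t⁻⁶ = (1/120) ∫₀^∞ s⁵ e^{-st} ds`, Tonelli turns the integral into
`(1/120) ∫₀^∞ s⁵ L(s) ds`, where `L(s) = 16 (5s² + 4) / (s³ (s² + 4)³)` is the Laplace transform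
of `(sin t - t cos t)²`, computed from an explicit primitive. The resulting rational integrand
`16 s² (5s² + 4) / (s² + 4)³` has the primitive `16 (arctan (s/2) - s (3s² + 8) / (s² + 4)²)`,
which rises from `0` to `8π`; hence the value `8π / 120 = π / 15`.
-/

theorem tendsto_pow_mul_exp_neg_mul_atTop (n : ℕ) {r : ℝ} (hr : 0 < r) :
    Tendsto (fun t : ℝ => t ^ n * exp (-(r * t))) atTop (𝓝 0) := by
  simpa [Real.rpow_natCast] using tendsto_rpow_mul_exp_neg_mul_atTop_nhds_zero n r hr

theorem tendsto_exp_neg_mul_mul_quadratic_atTop {r : ℝ} (hr : 0 < r) (a b c : ℝ) :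
    Tendsto (fun t => exp (-(r * t)) * (a * t ^ 2 + b * t + c)) atTop (𝓝 0) := by
  have h := (((tendsto_pow_mul_exp_neg_mul_atTop 2 hr).const_mul a).add
    ((tendsto_pow_mul_exp_neg_mul_atTop 1 hr).const_mul b)).add
    ((tendsto_pow_mul_exp_neg_mul_atTop 0 hr).const_mul c)
  simp only [mul_zero, add_zero, pow_one, pow_zero, one_mul] at h
  exact h.congr fun t => by ring

theorem integral_Ioi_pow_mul_exp_neg_mul (n : ℕ) {r : ℝ} (hr : 0 < r) :
    ∫ t in Ioi (0 : ℝ), t ^ n * exp (-(r * t)) = n.factorial / r ^ (n + 1) := by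
  have h := integral_rpow_mul_exp_neg_mul_Ioi (a := n + 1) (by positivity) hr
  rw [Real.Gamma_nat_eq_factorial, add_sub_cancel_right, ← Nat.cast_add_one, Real.rpow_natCast,
    one_div, inv_pow, inv_mul_eq_div] at h
  rw [← h]
  exact setIntegral_congr_fun measurableSet_Ioi fun t _ => by rw [Real.rpow_natCast]

theorem integrable_uncurry_of_ae_nonneg {α β : Type*} [MeasurableSpace α] [MeasurableSpace β]
    {μ : Measure α} {ν : Measure β} [SFinite μ] [SFinite ν] {f : α → β → ℝ}
    (hf : AEStronglyMeasurable (uncurry f) (μ.prod ν)) (hf_nonneg : ∀ᵐ y ∂ν, ∀ᵐ x ∂μ, 0 ≤ f x y)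
    (hf_int : ∀ᵐ y ∂ν, Integrable (f · y) μ) (h_iter : Integrable (fun y => ∫ x, f x y ∂μ) ν) :
    Integrable (uncurry f) (μ.prod ν) := by
  refine (integrable_prod_iff' hf).2 ⟨hf_int, h_iter.congr ?_⟩
  filter_upwards [hf_nonneg] with y hy
  exact integral_congr_ae (hy.mono fun x hx => (Real.norm_of_nonneg hx).symm)

theorem sin_sub_mul_cos_sq (t : ℝ) :
    (sin t - t * cos t) ^ 2 =
      1 / 2 + t ^ 2 / 2 + (t ^ 2 / 2 - 1 / 2) * cos (2 * t) - t * sin (2 * t) := by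
  rw [cos_two_mul, sin_two_mul]
  linear_combination sin_sq_add_cos_sq t

namespace HardCoreScattering

/-- Found by integrating the expansion `sin_sub_mul_cos_sq` against `e^{-st}` term by term. -/
noncomputable def laplacePrimitive (s t : ℝ) : ℝ :=
  exp (-(s * t)) * (-1 / (2 * s) * t ^ 2 + -1 / s ^ 2 * t + -(s ^ 2 + 2) / (2 * s ^ 3))
    + exp (-(s * t)) * (-s / (2 * (s ^ 2 + 4)) * t ^ 2 + (s ^ 2 + 12) / (s ^ 2 + 4) ^ 2 * t
        + s * (s ^ 4 + 14 * s ^ 2 + 72) / (2 * (s ^ 2 + 4) ^ 3)) * cos (2 * t)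
    + exp (-(s * t)) * (1 / (s ^ 2 + 4) * t ^ 2 + s * (s ^ 2 + 8) / (s ^ 2 + 4) ^ 2 * t
        + -(2 * s ^ 2 + 40) / (s ^ 2 + 4) ^ 3) * sin (2 * t)

theorem hasDerivAt_laplacePrimitive {s : ℝ} (hs : s ≠ 0) (t : ℝ) :
    HasDerivAt (laplacePrimitive s) ((sin t - t * cos t) ^ 2 * exp (-(s * t))) t := by
  have hlin (c : ℝ) : HasDerivAt (fun t => c * t) c t := by
    simpa using (hasDerivAt_id t).const_mul c
  have hexp : HasDerivAt (fun t => exp (-(s * t))) (exp (-(s * t)) * -s) t := (hlin s).neg.exp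
  have hquad (a b c : ℝ) : HasDerivAt (fun t => a * t ^ 2 + b * t + c) (a * (2 * t) + b) t := by
    simpa using (((hasDerivAt_pow 2 t).const_mul a).add (hlin b)).add_const c
  apply HasDerivAt.congr_deriv
  · exact ((hexp.mul (hquad _ _ _)).add ((hexp.mul (hquad _ _ _)).mul (hlin 2).cos)).add
      ((hexp.mul (hquad _ _ _)).mul (hlin 2).sin)
  simp only [Pi.mul_apply]
  rw [sin_sub_mul_cos_sq]
  field_simp
  ring

theorem tendsto_laplacePrimitive_atTop {s : ℝ} (hs : 0 < s) :
    Tendsto (laplacePrimitive s) atTop (𝓝 0) := by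
  have hcos : IsBoundedUnder (· ≤ ·) atTop (norm ∘ fun t : ℝ => cos (2 * t)) :=
    isBoundedUnder_of ⟨1, fun t => abs_cos_le_one _⟩
  have hsin : IsBoundedUnder (· ≤ ·) atTop (norm ∘ fun t : ℝ => sin (2 * t)) :=
    isBoundedUnder_of ⟨1, fun t => abs_sin_le_one _⟩
  rw [show 𝓝 (0 : ℝ) = 𝓝 (0 + 0 + 0) by simp]
  exact ((tendsto_exp_neg_mul_mul_quadratic_atTop hs _ _ _).add
    ((tendsto_exp_neg_mul_mul_quadratic_atTop hs _ _ _).zero_mul_isBoundedUnder_le hcos)).add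
    ((tendsto_exp_neg_mul_mul_quadratic_atTop hs _ _ _).zero_mul_isBoundedUnder_le hsin)

theorem laplacePrimitive_zero {s : ℝ} (hs : s ≠ 0) :
    laplacePrimitive s 0 = -(16 * (5 * s ^ 2 + 4) / (s ^ 3 * (s ^ 2 + 4) ^ 3)) := by
  simp only [laplacePrimitive, mul_zero, neg_zero, exp_zero, cos_zero, sin_zero]
  field_simp
  ring

theorem integrableOn_sin_sub_mul_cos_sq_mul_exp_neg_mul {s : ℝ} (hs : 0 < s) :
    IntegrableOn (fun t => (sin t - t * cos t) ^ 2 * exp (-(s * t))) (Ioi 0) :=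
  integrableOn_Ioi_deriv_of_nonneg' (fun t _ => hasDerivAt_laplacePrimitive hs.ne' t)
    (fun t _ => by positivity) (tendsto_laplacePrimitive_atTop hs)

theorem integral_sin_sub_mul_cos_sq_mul_exp_neg_mul {s : ℝ} (hs : 0 < s) :
    ∫ t in Ioi 0, (sin t - t * cos t) ^ 2 * exp (-(s * t)) =
      16 * (5 * s ^ 2 + 4) / (s ^ 3 * (s ^ 2 + 4) ^ 3) := by
  rw [integral_Ioi_of_hasDerivAt_of_nonneg' (fun t _ => hasDerivAt_laplacePrimitive hs.ne' t)
    (fun t _ => by positivity) (tendsto_laplacePrimitive_atTop hs), laplacePrimitive_zero hs.ne',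
    zero_sub, neg_neg]

noncomputable def arctanPrimitive (s : ℝ) : ℝ :=
  arctan (s / 2) - s * (3 * s ^ 2 + 8) / (s ^ 2 + 4) ^ 2

theorem hasDerivAt_arctanPrimitive (s : ℝ) :
    HasDerivAt arctanPrimitive (s ^ 2 * (5 * s ^ 2 + 4) / (s ^ 2 + 4) ^ 3) s := by
  have hsq : HasDerivAt (fun s : ℝ => s ^ 2) (2 * s) s := by simpa using hasDerivAt_pow 2 s
  have hcubic : HasDerivAt (fun s : ℝ => s * (3 * s ^ 2 + 8)) (9 * s ^ 2 + 8) s := by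
    refine ((hasDerivAt_id' s).mul ((hsq.const_mul 3).add_const 8)).congr_deriv ?_
    ring
  apply HasDerivAt.congr_deriv
  · exact ((hasDerivAt_id' s).div_const 2).arctan.sub
      (hcubic.div ((hsq.add_const 4).pow 2) (by positivity))
  have : s ^ 2 + 4 ≠ 0 := by positivity
  field_simp
  ring

theorem tendsto_arctanPrimitive_atTop : Tendsto arctanPrimitive atTop (𝓝 (π / 2)) := by
  have harctan : Tendsto (fun s : ℝ => arctan (s / 2)) atTop (𝓝 (π / 2)) :=
    (tendsto_arctan_atTop.mono_right nhdsWithin_le_nhds).comp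
      (tendsto_id.atTop_div_const two_pos)
  have hrat : Tendsto (fun s : ℝ => s * (3 * s ^ 2 + 8) / (s ^ 2 + 4) ^ 2) atTop (𝓝 0) := by
    refine squeeze_zero' ?_ ?_ (tendsto_const_nhds.div_atTop tendsto_id :
      Tendsto (fun s : ℝ => 3 / s) _ _)
    · filter_upwards [eventually_ge_atTop 0] with s hs using by positivity
    · filter_upwards [eventually_gt_atTop 0] with s hs
      rw [div_le_div_iff₀ (by positivity) hs]
      nlinarith [sq_nonneg s, pow_pos hs 4]
  rw [← sub_zero (π / 2)]
  exact harctan.sub hrat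

theorem integrableOn_arctanPrimitive_deriv :
    IntegrableOn (fun s : ℝ => s ^ 2 * (5 * s ^ 2 + 4) / (s ^ 2 + 4) ^ 3) (Ioi 0) :=
  integrableOn_Ioi_deriv_of_nonneg' (fun s _ => hasDerivAt_arctanPrimitive s)
    (fun s _ => by positivity) tendsto_arctanPrimitive_atTop

theorem integral_arctanPrimitive_deriv :
    ∫ s in Ioi (0 : ℝ), s ^ 2 * (5 * s ^ 2 + 4) / (s ^ 2 + 4) ^ 3 = π / 2 := by
  rw [integral_Ioi_of_hasDerivAt_of_nonneg' (fun s _ => hasDerivAt_arctanPrimitive s)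
    (fun s _ => by positivity) tendsto_arctanPrimitive_atTop]
  simp [arctanPrimitive]

end HardCoreScattering

open HardCoreScattering in
theorem integrableOn_and_integral_sin_sub_mul_cos_sq_div_pow_six :
    IntegrableOn (fun t : ℝ => (sin t - t * cos t) ^ 2 / t ^ 6) (Ioi 0) ∧
      ∫ t in Ioi (0 : ℝ), (sin t - t * cos t) ^ 2 / t ^ 6 = π / 15 := by
  let k : ℝ → ℝ → ℝ := fun t s => (sin t - t * cos t) ^ 2 * (s ^ 5 * exp (-(s * t)))
  have hk_s : ∀ t ∈ Ioi (0 : ℝ),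
      ∫ s in Ioi 0, k t s = 120 * ((sin t - t * cos t) ^ 2 / t ^ 6) := fun t ht => by
    simp only [k, mul_comm _ t, integral_const_mul, integral_Ioi_pow_mul_exp_neg_mul 5 ht]
    norm_num [Nat.factorial]
    ring
  have hk_t : ∀ s ∈ Ioi (0 : ℝ),
      ∫ t in Ioi 0, k t s = 16 * (s ^ 2 * (5 * s ^ 2 + 4) / (s ^ 2 + 4) ^ 3) := fun s hs => by
    have hs : 0 < s := hs
    simp only [k, mul_left_comm _ (s ^ 5), integral_const_mul,
      integral_sin_sub_mul_cos_sq_mul_exp_neg_mul hs]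
    field_simp
  have hk : Integrable (uncurry k) ((volume.restrict (Ioi 0)).prod (volume.restrict (Ioi 0))) := by
    refine integrable_uncurry_of_ae_nonneg
      (by fun_prop : Continuous (uncurry k)).aestronglyMeasurable ?_ ?_ ?_
    · filter_upwards [ae_restrict_mem measurableSet_Ioi] with s (hs : 0 < s)
      exact ae_of_all _ fun t => by positivity
    · filter_upwards [ae_restrict_mem measurableSet_Ioi] with s (hs : 0 < s)
      exact IntegrableOn.congr_fun
        ((integrableOn_sin_sub_mul_cos_sq_mul_exp_neg_mul hs).const_mul (s ^ 5))
        (fun t _ => by simp only [k]; ring) measurableSet_Ioi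
    · exact IntegrableOn.congr_fun (integrableOn_arctanPrimitive_deriv.const_mul 16)
        (fun s hs => (hk_t s hs).symm) measurableSet_Ioi
  have h120 : IntegrableOn (fun t => 120 * ((sin t - t * cos t) ^ 2 / t ^ 6)) (Ioi 0) :=
    IntegrableOn.congr_fun hk.integral_prod_left hk_s measurableSet_Ioi
  refine ⟨(by simpa using h120.const_mul (1 / 120) : Integrable _ _), ?_⟩
  have := integral_integral_swap hk
  rw [setIntegral_congr_fun measurableSet_Ioi hk_s, setIntegral_congr_fun measurableSet_Ioi hk_t,
    integral_const_mul, integral_const_mul, integral_arctanPrimitive_deriv] at this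
  linarith

/-- The hard-core scattering integral of Baker and Gammel:
`∫_0^∞ ((sin t - t cos t)/t³)² dt = π/15`; equivalently
`S(x) = ∫_0^x ((sin t)/t³ - (cos t)/t²)² dt` tends to `π/15` as `x → ∞`. -/
theorem hard_core_scattering_integral :
    (∫ t in Set.Ioi (0 : ℝ), ((Real.sin t - t * Real.cos t) / t ^ 3) ^ 2) = Real.pi / 15 ∧
    Tendsto (fun x : ℝ => ∫ t in (0 : ℝ)..x, (Real.sin t / t ^ 3 - Real.cos t / t ^ 2) ^ 2)
      atTop (𝓝 (Real.pi / 15)) := by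
  obtain ⟨hint, hval⟩ := integrableOn_and_integral_sin_sub_mul_cos_sq_div_pow_six
  have hfrac : (fun t : ℝ => ((sin t - t * cos t) / t ^ 3) ^ 2) =
      fun t => (sin t - t * cos t) ^ 2 / t ^ 6 := by
    funext t
    rw [div_pow, ← pow_mul]
  -- at `t = 0` both sides are `0`, by the convention `x / 0 = 0`
  have hdiff : (fun t : ℝ => (sin t / t ^ 3 - cos t / t ^ 2) ^ 2) =
      fun t => (sin t - t * cos t) ^ 2 / t ^ 6 := by
    funext t
    rcases eq_or_ne t 0 with rfl | ht
    · simp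
    · field_simp
  rw [hfrac, hdiff, ← hval]
  exact ⟨rfl, intervalIntegral_tendsto_integral_Ioi 0 hint tendsto_id⟩
end

section
/- The circular Wilson loop function f(x) = 2 exp(-x) I_1(x)/x, where I_1(x) = Σ_{k≥0} (x/2)^{2k+1}/(k!(k+1)!), satisfies the large-variable asymptotics lim_{x→∞} x^{3/2} f(x) = √(2/π); equivalently, lim_{x→∞} √(2πx) exp(-x) I_1(x) = 1. -/
open Filter Topology Real Set MeasureTheory

/-!
Expanding `exp (x cos θ)` in powers of `x` and integrating term by term against `sin² θ`
(Wallis' integrals) gives `I₁(x) = (x / π) ∫₀^π exp (x cos θ) sin² θ dθ`. The substitution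
`cos θ = 1 - v` turns `exp (-x) I₁(x)` into the Laplace integral
`(x / π) ∫₀² exp (-x v) v^(1/2) √(2 - v) dv`, and Watson's lemma gives its leading behaviour
`(x / π) Γ(3/2) √2 x^(-3/2) = x^(-1/2) / √(2π)`. Watson's lemma itself follows from rescaling
`v = w / x` and dominated convergence against the integrand of `Γ(s)`.
-/

noncomputable def besselI₁ (x : ℝ) : ℝ :=
  ∑' k : ℕ, (x / 2) ^ (2 * k + 1) / ((k.factorial : ℝ) * ((k + 1).factorial : ℝ))

theorem integral_cos_pow_two_mul (m : ℕ) :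
    ∫ θ in 0..π, cos θ ^ (2 * m) = π * (2 * m).factorial / (4 ^ m * (m.factorial : ℝ) ^ 2) := by
  induction m with
  | zero => simp
  | succ m ih =>
    rw [Nat.mul_succ, integral_cos_pow, ih, Nat.factorial_succ, Nat.factorial_succ,
      Nat.factorial_succ]
    simp only [sin_zero, sin_pi, mul_zero, sub_zero, zero_div, zero_add]
    push_cast
    field_simp
    ring

theorem integral_cos_pow_two_mul_add_one (m : ℕ) : ∫ θ in 0..π, cos θ ^ (2 * m + 1) = 0 := by
  induction m with
  | zero => simp
  | succ m ih => rw [Nat.mul_succ, add_right_comm, integral_cos_pow, ih]; simp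

theorem integral_cos_pow_mul_sin_sq (n : ℕ) :
    ∫ θ in 0..π, cos θ ^ n * sin θ ^ 2 = (∫ θ in 0..π, cos θ ^ n) / (n + 2) := by
  have hint (k : ℕ) : IntervalIntegrable (fun θ => cos θ ^ k) volume 0 π :=
    (continuous_cos.pow k).intervalIntegrable 0 π
  calc ∫ θ in 0..π, cos θ ^ n * sin θ ^ 2
      = (∫ θ in 0..π, cos θ ^ n) - ∫ θ in 0..π, cos θ ^ (n + 2) := by
        rw [← intervalIntegral.integral_sub (hint n) (hint (n + 2))]
        simp only [sin_sq, pow_add]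
        ring_nf
    _ = (∫ θ in 0..π, cos θ ^ n) / (n + 2) := by
        rw [integral_cos_pow]
        simp only [sin_zero, sin_pi, mul_zero, sub_zero, zero_div, zero_add]
        field_simp
        ring

theorem hasSum_integral_exp_mul_cos_mul {g : ℝ → ℝ} (hg : Continuous g) (x a b : ℝ) :
    HasSum (fun n : ℕ => x ^ n / n.factorial * ∫ θ in a..b, cos θ ^ n * g θ)
      (∫ θ in a..b, exp (x * cos θ) * g θ) := by
  have hasSum_exp (y : ℝ) : HasSum (fun n : ℕ => y ^ n / n.factorial) (exp y) :=
    exp_eq_exp_ℝ ▸ NormedSpace.expSeries_div_hasSum_exp y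
  simp only [← intervalIntegral.integral_const_mul]
  refine intervalIntegral.hasSum_integral_of_dominated_convergence
    (fun n θ => |x| ^ n / n.factorial * |g θ|)
    (fun n => (by fun_prop : Continuous _).aestronglyMeasurable)
    (fun n => ae_of_all _ fun θ _ => ?_)
    (ae_of_all _ fun θ _ => ((hasSum_exp |x|).mul_right _).summable) ?_
    (ae_of_all _ fun θ _ => ?_)
  · rw [norm_mul, norm_div, norm_pow, norm_mul, norm_pow, Real.norm_natCast, Real.norm_eq_abs,
      Real.norm_eq_abs, Real.norm_eq_abs, ← mul_assoc]
    gcongr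
    exact mul_le_of_le_one_right (by positivity) (pow_le_one₀ (abs_nonneg _) (abs_cos_le_one θ))
  · simp only [((hasSum_exp |x|).mul_right _).tsum_eq]
    exact (by fun_prop : Continuous _).intervalIntegrable a b
  · refine ((hasSum_exp (x * cos θ)).mul_right (g θ)).congr_fun fun n => ?_
    ring

theorem besselI₁_eq_integral (x : ℝ) :
    besselI₁ x = x / π * ∫ θ in 0..π, exp (x * cos θ) * sin θ ^ 2 := by
  have H := (hasSum_integral_exp_mul_cos_mul (by fun_prop : Continuous fun θ => sin θ ^ 2)
    x 0 π).mul_left (x / π)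
  have hodd : ∀ n ∉ range (2 * ·), x / π * (x ^ n / n.factorial *
      ∫ θ in 0..π, cos θ ^ n * sin θ ^ 2) = 0 := by
    rintro n hn
    obtain ⟨m, rfl⟩ : Odd n := Nat.not_even_iff_odd.1 fun ⟨m, hm⟩ => hn ⟨m, by simp only [hm]; ring⟩
    simp [integral_cos_pow_mul_sin_sq, integral_cos_pow_two_mul_add_one]
  rw [← (((mul_right_injective₀ (two_ne_zero' ℕ)).hasSum_iff hodd).2 H).tsum_eq, besselI₁]
  congr 1
  funext k
  simp only [Function.comp_apply, integral_cos_pow_mul_sin_sq, integral_cos_pow_two_mul,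
    Nat.factorial_succ]
  have h4 : (4 : ℝ) ^ k = 2 ^ (2 * k) := by rw [pow_mul]; norm_num
  push_cast
  rw [h4, div_pow]
  field_simp
  ring

theorem integral_comp_cos_mul_sin {g : ℝ → ℝ} (hg : Continuous g) :
    ∫ θ in 0..π, g (cos θ) * sin θ = ∫ u in -1..1, g u := by
  have h := intervalIntegral.integral_comp_mul_deriv (a := 0) (b := π)
    (fun θ _ => hasDerivAt_cos θ) (by fun_prop : Continuous fun θ => -sin θ).continuousOn hg
  simp only [Function.comp_apply, mul_neg, intervalIntegral.integral_neg, cos_zero, cos_pi,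
    intervalIntegral.integral_symm (-1) 1] at h
  exact neg_inj.1 h

theorem integral_exp_mul_cos_mul_sin_sq (x : ℝ) :
    ∫ θ in 0..π, exp (x * cos θ) * sin θ ^ 2 = ∫ u in -1..1, exp (x * u) * √(1 - u ^ 2) := by
  rw [← integral_comp_cos_mul_sin (by fun_prop)]
  refine intervalIntegral.integral_congr fun θ hθ => ?_
  rw [uIcc_of_le pi_pos.le] at hθ
  simp only [← sin_sq, sqrt_sq (sin_nonneg_of_mem_Icc hθ)]
  ring

theorem exp_neg_mul_integral_exp_mul_sqrt_one_sub_sq (x : ℝ) :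
    exp (-x) * ∫ u in -1..1, exp (x * u) * √(1 - u ^ 2)
      = ∫ v in 0..2, exp (-(x * v)) * v ^ (1 / 2 : ℝ) * √(2 - v) := by
  have h := intervalIntegral.integral_comp_sub_left
    (fun u => exp (-x) * (exp (x * u) * √(1 - u ^ 2))) (a := 0) (b := 2) 1
  rw [show (1 : ℝ) - 2 = -1 by norm_num, sub_zero] at h
  rw [← intervalIntegral.integral_const_mul, ← h]
  refine intervalIntegral.integral_congr fun v hv => ?_
  rw [uIcc_of_le zero_le_two] at hv
  have hsq : 1 - (1 - v) ^ 2 = v * (2 - v) := by ring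
  simp only [hsq, sqrt_mul hv.1, ← sqrt_eq_rpow, ← mul_assoc, ← exp_add]
  ring_nf

theorem tendsto_indicator_Ioc_mul_comp_div {c : ℝ} {φ : ℝ → ℝ} (hc : 0 < c)
    (hφ : ContinuousWithinAt φ (Icc 0 c) 0) (G : ℝ → ℝ) (w : ℝ) :
    Tendsto (fun x => (Ioc 0 (c * x)).indicator (fun w => G w * φ (w / x)) w) atTop
      (𝓝 ((Ioi 0).indicator (fun w => G w * φ 0) w)) := by
  rcases le_or_gt w 0 with hw | hw
  · have hw' : w ∉ Ioi 0 := not_lt.2 hw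
    rw [indicator_of_notMem hw']
    exact tendsto_const_nhds.congr fun x => (indicator_of_notMem (fun h => hw' h.1) _).symm
  have hmem : ∀ᶠ x in atTop, w ∈ Ioc 0 (c * x) := by
    filter_upwards [eventually_ge_atTop (w / c)] with x hx
    exact ⟨hw, by rwa [div_le_iff₀' hc] at hx⟩
  have hdiv : Tendsto (fun x => w / x) atTop (𝓝[Icc 0 c] 0) := by
    refine tendsto_nhdsWithin_iff.2 ⟨tendsto_const_nhds.div_atTop tendsto_id, ?_⟩
    filter_upwards [eventually_gt_atTop 0, hmem] with x hx hwx
    exact ⟨by positivity, (div_le_iff₀ hx).2 hwx.2⟩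
  rw [indicator_of_mem (mem_Ioi.2 hw)]
  refine (tendsto_const_nhds.mul (hφ.tendsto.comp hdiv)).congr' ?_
  filter_upwards [hmem] with x hx
  rw [indicator_of_mem hx]
  rfl

theorem tendsto_integral_mul_comp_div {c : ℝ} {G φ : ℝ → ℝ} (hc : 0 < c)
    (hG : IntegrableOn G (Ioi 0)) (hφ : ContinuousOn φ (Icc 0 c)) :
    Tendsto (fun x => ∫ w in 0..c * x, G w * φ (w / x)) atTop
      (𝓝 ((∫ w in Ioi 0, G w) * φ 0)) := by
  obtain ⟨M, hM⟩ := isCompact_Icc.exists_bound_of_continuousOn hφ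
  have hφ_div {x w : ℝ} (hx : 0 < x) (hw : w ∈ Ioc 0 (c * x)) : w / x ∈ Icc 0 c :=
    ⟨by have := hw.1; positivity, (div_le_iff₀ hx).2 hw.2⟩
  have hlim : Tendsto (fun x => ∫ w, (Ioc 0 (c * x)).indicator (fun w => G w * φ (w / x)) w)
      atTop (𝓝 (∫ w, (Ioi 0).indicator (fun w => G w * φ 0) w)) := by
    refine tendsto_integral_filter_of_dominated_convergence
      ((Ioi 0).indicator fun w => ‖G w‖ * M) ?_ ?_
      ((integrable_indicator_iff measurableSet_Ioi).2 (hG.norm.mul_const M))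
      (ae_of_all _ (tendsto_indicator_Ioc_mul_comp_div hc
        (hφ.continuousWithinAt (left_mem_Icc.2 hc.le)) G))
    · filter_upwards [eventually_gt_atTop 0] with x hx
      refine (aestronglyMeasurable_indicator_iff measurableSet_Ioc).2 (AEStronglyMeasurable.mul
        (hG.aestronglyMeasurable.mono_measure (Measure.restrict_mono Ioc_subset_Ioi_self le_rfl))
        ((hφ.comp (continuousOn_id.div_const x) fun w hw => hφ_div hx hw).aestronglyMeasurable
          measurableSet_Ioc))
    · filter_upwards [eventually_gt_atTop 0] with x hx
      refine ae_of_all _ fun w => ?_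
      by_cases hw : w ∈ Ioc 0 (c * x)
      · rw [indicator_of_mem hw, indicator_of_mem (Ioc_subset_Ioi_self hw), norm_mul]
        exact mul_le_mul_of_nonneg_left (hM _ (hφ_div hx hw)) (norm_nonneg _)
      · rw [indicator_of_notMem hw, norm_zero]
        have hM_nonneg : 0 ≤ M := (norm_nonneg _).trans (hM 0 (left_mem_Icc.2 hc.le))
        exact indicator_nonneg (fun w _ => by positivity) w
  rw [integral_indicator measurableSet_Ioi, integral_mul_const] at hlim
  refine hlim.congr' ?_
  filter_upwards [eventually_gt_atTop 0] with x hx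
  rw [intervalIntegral.integral_of_le (by positivity), integral_indicator measurableSet_Ioc]

theorem rpow_mul_integral_exp_neg_mul_eq_integral {x c : ℝ} (hx : 0 < x) (hc : 0 ≤ c)
    (s : ℝ) (φ : ℝ → ℝ) :
    x ^ s * ∫ v in 0..c, exp (-(x * v)) * v ^ (s - 1) * φ v
      = ∫ w in 0..c * x, exp (-w) * w ^ (s - 1) * φ (w / x) := by
  have h := intervalIntegral.integral_comp_div
    (fun v => exp (-(x * v)) * v ^ (s - 1) * φ v) (a := 0) (b := c * x) hx.ne'
  rw [zero_div, mul_div_cancel_right₀ c hx.ne'] at h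
  calc x ^ s * ∫ v in 0..c, exp (-(x * v)) * v ^ (s - 1) * φ v
      = x ^ (s - 1) * ∫ w in 0..c * x, exp (-(x * (w / x))) * (w / x) ^ (s - 1) * φ (w / x) := by
        rw [h, smul_eq_mul, ← mul_assoc, ← rpow_add_one hx.ne', sub_add_cancel]
    _ = ∫ w in 0..c * x, exp (-w) * w ^ (s - 1) * φ (w / x) := by
        rw [← intervalIntegral.integral_const_mul]
        refine intervalIntegral.integral_congr fun w hw => ?_
        rw [uIcc_of_le (by positivity)] at hw
        rw [mul_div_cancel₀ w hx.ne', div_rpow hw.1 hx.le]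
        field_simp

/-- Watson's lemma, leading order. -/
theorem tendsto_rpow_mul_integral_exp_neg_mul {s c : ℝ} {φ : ℝ → ℝ} (hs : 0 < s) (hc : 0 < c)
    (hφ : ContinuousOn φ (Icc 0 c)) :
    Tendsto (fun x => x ^ s * ∫ v in 0..c, exp (-(x * v)) * v ^ (s - 1) * φ v) atTop
      (𝓝 (Gamma s * φ 0)) := by
  rw [Gamma_eq_integral hs]
  refine (tendsto_integral_mul_comp_div hc (GammaIntegral_convergent hs) hφ).congr' ?_
  filter_upwards [eventually_gt_atTop 0] with x hx
  exact (rpow_mul_integral_exp_neg_mul_eq_integral hx hc.le s φ).symm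

theorem tendsto_rpow_mul_exp_neg_mul_besselI₁_div :
    Tendsto (fun x => x ^ (3 / 2 : ℝ) * (exp (-x) * besselI₁ x / x)) atTop
      (𝓝 (√(2 * π))⁻¹) := by
  have hW := tendsto_rpow_mul_integral_exp_neg_mul (s := 3 / 2) (c := 2) (φ := fun v => √(2 - v))
    (by norm_num) two_pos (by fun_prop : Continuous fun v : ℝ => √(2 - v)).continuousOn
  have hval : π⁻¹ * (Gamma (3 / 2) * √(2 - 0)) = (√(2 * π))⁻¹ := by
    rw [show (3 / 2 : ℝ) = 1 / 2 + 1 by norm_num, Gamma_add_one (by norm_num), Gamma_one_half_eq,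
      sub_zero, sqrt_mul zero_le_two]
    field_simp
    rw [sq_sqrt zero_le_two, sq_sqrt pi_pos.le]
  rw [show (3 / 2 : ℝ) - 1 = 1 / 2 by norm_num] at hW
  rw [← hval]
  refine (hW.const_mul π⁻¹).congr' ?_
  filter_upwards [eventually_gt_atTop 0] with x hx
  rw [besselI₁_eq_integral, integral_exp_mul_cos_mul_sin_sq,
    ← exp_neg_mul_integral_exp_mul_sqrt_one_sub_sq]
  field_simp

/-- The circular Wilson loop function `f(x) = 2 exp(-x) I₁(x)/x`, with
`I₁(x) = Σ_{k≥0} (x/2)^(2k+1)/(k!(k+1)!)`, satisfies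
`lim_{x→∞} x^(3/2) f(x) = √(2/π)`; equivalently `lim_{x→∞} √(2πx) exp(-x) I₁(x) = 1`. -/
theorem wilson_loop_large_x :
    Tendsto (fun x : ℝ =>
        x ^ ((3 : ℝ) / 2) *
          (2 * Real.exp (-x)
              * (∑' k : ℕ, (x / 2) ^ (2 * k + 1)
                  / ((k.factorial : ℝ) * ((k + 1).factorial : ℝ))) / x))
      atTop (𝓝 (Real.sqrt (2 / Real.pi))) ∧
    Tendsto (fun x : ℝ =>
        Real.sqrt (2 * Real.pi * x) * Real.exp (-x)
          * (∑' k : ℕ, (x / 2) ^ (2 * k + 1)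
              / ((k.factorial : ℝ) * ((k + 1).factorial : ℝ))))
      atTop (𝓝 1) := by
  have h := tendsto_rpow_mul_exp_neg_mul_besselI₁_div
  unfold besselI₁ at h
  have h2π : 0 < √(2 * π) := sqrt_pos.2 (by positivity)
  constructor
  · have hlim : √(2 / π) = 2 * (√(2 * π))⁻¹ := by
      rw [← sq_eq_sq₀ (sqrt_nonneg _) (by positivity), mul_pow, inv_pow, sq_sqrt (by positivity),
        sq_sqrt (by positivity)]
      field_simp
    rw [hlim]
    refine (h.const_mul 2).congr fun x => ?_
    ring
  · rw [← mul_inv_cancel₀ h2π.ne']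
    refine (h.const_mul √(2 * π)).congr' ?_
    filter_upwards [eventually_gt_atTop 0] with x hx
    rw [sqrt_mul (by positivity : (0 : ℝ) ≤ 2 * π) x, show (3 / 2 : ℝ) = 1 / 2 + 1 by norm_num,
      rpow_add_one hx.ne', ← sqrt_eq_rpow]
    field_simp
end

section
/- The third-order self-similar root approximant K(x) = x · (16x^6/63 + (32x^4/45 + 4x^2/3 + 1)^{3/2})^{-1/6} reproduces the small-variable expansion of the error-function integral F(x) = ∫_0^x exp(-u^2) du through fifth order: K(x) = x - x^3/3 + x^5/10 + O(x^7) as x → 0. -/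
open Filter Topology Real Asymptotics

/-!
Write `q` for the radicand, `s = 1 + 2x²/3 + 2x⁴/15` and `P = 1 - x²/3 + x⁴/10`. Modulo
`O(x⁶)` one has `√q ≡ s`, hence `q^(3/2) ≡ s³`, and `P² s ≡ 1`, hence `P⁶ (16x⁶/63 + q^(3/2)) ≡ 1`,
which says that the sixth powers of `(16x⁶/63 + q^(3/2))^(-1/6)` and `P` agree modulo `O(x⁶)`.
Congruences pass to and from `n`-th powers of functions tending to the same nonzero limit `a`,
since `fⁿ - gⁿ = (f - g) ∑ fⁱ gⁿ⁻¹⁻ⁱ` and the sum tends to `n aⁿ⁻¹ ≠ 0`.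
-/

section PowSubPow

variable {α 𝕜 : Type*} [NormedField 𝕜] {l : Filter α} {f g h : α → 𝕜}

theorem Filter.Tendsto.mul_isBigO {r : α → 𝕜} {c : 𝕜} (hr : Tendsto r l (𝓝 c))
    (hf : f =O[l] h) : (fun x => r x * f x) =O[l] h := by
  simpa using (hr.isBigO_one 𝕜).mul hf

theorem isBigO_pow_sub_pow_iff [CharZero 𝕜] {a : 𝕜} {n : ℕ} (ha : a ≠ 0) (hn : n ≠ 0)
    (hf : Tendsto f l (𝓝 a)) (hg : Tendsto g l (𝓝 a)) :
    (fun x => f x ^ n - g x ^ n) =O[l] h ↔ (fun x => f x - g x) =O[l] h := by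
  set S : α → 𝕜 := fun x => ∑ i ∈ Finset.range n, f x ^ i * g x ^ (n - 1 - i)
  have hS : Tendsto S l (𝓝 (n * a ^ (n - 1))) := by
    rw [← geom_sum₂_self]
    exact tendsto_finsetSum _ fun i _ => (hf.pow i).mul (hg.pow _)
  have hS0 : (n : 𝕜) * a ^ (n - 1) ≠ 0 := mul_ne_zero (Nat.cast_ne_zero.2 hn) (pow_ne_zero _ ha)
  have hfactor : ∀ x, f x ^ n - g x ^ n = S x * (f x - g x) := fun x =>
    (geom_sum₂_mul (f x) (g x) n).symm
  simp only [hfactor]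
  refine ⟨fun hpow => ?_, hS.mul_isBigO⟩
  have hdiv : (fun x => f x - g x) =ᶠ[l] fun x => (S x)⁻¹ * (S x * (f x - g x)) := by
    filter_upwards [hS.eventually_ne hS0] with x hx
    rw [inv_mul_cancel_left₀ hx]
  exact (hS.inv₀ hS0).mul_isBigO hpow |>.congr' hdiv.symm EventuallyEq.rfl

end PowSubPow

theorem Real.rpow_three_halves {a : ℝ} (ha : 0 ≤ a) : a ^ ((3 : ℝ) / 2) = a * √a := by
  rw [show (3 : ℝ) / 2 = 1 + 1 / 2 by norm_num, rpow_add' ha (by norm_num), rpow_one,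
    sqrt_eq_rpow]

namespace RootApproximant

noncomputable def radicand (x : ℝ) : ℝ := 32 * x ^ 4 / 45 + 4 * x ^ 2 / 3 + 1

noncomputable def sqrtRadicandTaylor (x : ℝ) : ℝ := 1 + 2 * x ^ 2 / 3 + 2 * x ^ 4 / 15

noncomputable def base (x : ℝ) : ℝ := 16 * x ^ 6 / 63 + radicand x ^ ((3 : ℝ) / 2)

/-- `x * erfTaylor x` is the Taylor polynomial of `∫₀ˣ exp (-u²) du` to order `x⁵`. -/
noncomputable def erfTaylor (x : ℝ) : ℝ := 1 - x ^ 2 / 3 + x ^ 4 / 10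

theorem radicand_pos (x : ℝ) : 0 < radicand x := by
  unfold radicand; positivity

theorem base_pos (x : ℝ) : 0 < base x := by
  have := rpow_pos_of_pos (radicand_pos x) ((3 : ℝ) / 2)
  unfold base; positivity

theorem base_zero : base 0 = 1 := by
  norm_num [base, radicand]

theorem continuous_radicand : Continuous radicand := by
  unfold radicand; fun_prop

theorem continuous_sqrtRadicandTaylor : Continuous sqrtRadicandTaylor := by
  unfold sqrtRadicandTaylor; fun_prop

theorem continuous_erfTaylor : Continuous erfTaylor := by
  unfold erfTaylor; fun_prop

theorem continuous_base : Continuous base := by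
  unfold base
  exact (by fun_prop : Continuous fun x : ℝ => 16 * x ^ 6 / 63).add
    (continuous_radicand.rpow_const fun x => Or.inl (radicand_pos x).ne')

theorem base_rpow_pow_six_mul_base (x : ℝ) : (base x ^ (-(1 / 6 : ℝ))) ^ 6 * base x = 1 := by
  have h6 := rpow_inv_natCast_pow (base_pos x).le (n := 6) (by norm_num)
  rw [Nat.cast_ofNat, ← one_div] at h6
  rw [rpow_neg (base_pos x).le, inv_pow, h6, inv_mul_cancel₀ (base_pos x).ne']

theorem isBigO_pow_mul {r : ℝ → ℝ} (hr : Continuous r) (n : ℕ) :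
    (fun x => x ^ n * r x) =O[𝓝 0] fun x => x ^ n := by
  simpa only [mul_comm] using (hr.tendsto 0).mul_isBigO (isBigO_refl (fun x : ℝ => x ^ n) _)

theorem radicand_sub_sqrtRadicandTaylor_sq (x : ℝ) :
    radicand x - sqrtRadicandTaylor x ^ 2 = x ^ 6 * (-(8 / 45) - 4 * x ^ 2 / 225) := by
  unfold radicand sqrtRadicandTaylor; ring

theorem sqrt_radicand_sub_sqrtRadicandTaylor :
    (fun x => √(radicand x) - sqrtRadicandTaylor x) =O[𝓝 0] fun x => x ^ 6 := by
  have hsqrt : Tendsto (fun x => √(radicand x)) (𝓝 0) (𝓝 1) :=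
    continuous_radicand.sqrt.tendsto' 0 1 (by norm_num [radicand])
  have htaylor : Tendsto sqrtRadicandTaylor (𝓝 0) (𝓝 1) :=
    continuous_sqrtRadicandTaylor.tendsto' 0 1 (by norm_num [sqrtRadicandTaylor])
  refine (isBigO_pow_sub_pow_iff one_ne_zero two_ne_zero hsqrt htaylor).1 ?_
  simpa only [sq_sqrt (radicand_pos _).le, radicand_sub_sqrtRadicandTaylor_sq]
    using isBigO_pow_mul (by fun_prop) 6

theorem base_sub_sqrtRadicandTaylor_pow_three :
    (fun x => base x - sqrtRadicandTaylor x ^ 3) =O[𝓝 0] fun x => x ^ 6 := by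
  have hsplit : ∀ x, base x - sqrtRadicandTaylor x ^ 3
      = x ^ 6 * (16 / 63 + sqrtRadicandTaylor x * (-(8 / 45) - 4 * x ^ 2 / 225))
        + radicand x * (√(radicand x) - sqrtRadicandTaylor x) := fun x => by
    rw [base, rpow_three_halves (radicand_pos x).le]
    linear_combination sqrtRadicandTaylor x * radicand_sub_sqrtRadicandTaylor_sq x
  simp only [hsplit]
  exact (isBigO_pow_mul (by unfold sqrtRadicandTaylor; fun_prop) 6).add
    ((continuous_radicand.tendsto 0).mul_isBigO sqrt_radicand_sub_sqrtRadicandTaylor)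

theorem one_sub_erfTaylor_pow_six_mul_base :
    (fun x => 1 - erfTaylor x ^ 6 * base x) =O[𝓝 0] fun x => x ^ 6 := by
  set y : ℝ → ℝ := fun x => erfTaylor x ^ 2 * sqrtRadicandTaylor x
  have hy : Tendsto y (𝓝 0) (𝓝 1) :=
    ((continuous_erfTaylor.pow 2).mul continuous_sqrtRadicandTaylor).tendsto' 0 1
      (by norm_num [erfTaylor, sqrtRadicandTaylor])
  have hy_sub : (fun x => 1 - y x) =O[𝓝 0] fun x => x ^ 6 := by
    have hpoly : ∀ x,
        1 - y x = x ^ 6 * -(7 / 135 + 19 * x ^ 2 / 2700 - x ^ 4 / 450 + x ^ 6 / 750) := fun x => by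
      simp only [y, erfTaylor, sqrtRadicandTaylor]; ring
    simpa only [hpoly] using isBigO_pow_mul (by fun_prop) 6
  have hy_cube := (isBigO_pow_sub_pow_iff one_ne_zero three_ne_zero tendsto_const_nhds hy).2 hy_sub
  have hsplit : ∀ x, 1 - erfTaylor x ^ 6 * base x
      = (1 ^ 3 - y x ^ 3) - erfTaylor x ^ 6 * (base x - sqrtRadicandTaylor x ^ 3) := fun x => by
    simp only [y]; ring
  simp only [hsplit]
  exact hy_cube.sub (((continuous_erfTaylor.pow 6).tendsto 0).mul_isBigO
    base_sub_sqrtRadicandTaylor_pow_three)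

theorem base_rpow_sub_erfTaylor :
    (fun x => base x ^ (-(1 / 6 : ℝ)) - erfTaylor x) =O[𝓝 0] fun x => x ^ 6 := by
  have hroot : Tendsto (fun x => base x ^ (-(1 / 6 : ℝ))) (𝓝 0) (𝓝 1) := by
    simpa [base_zero] using (continuous_base.tendsto 0).rpow_const (.inl (by simp [base_zero]))
  have htaylor : Tendsto erfTaylor (𝓝 0) (𝓝 1) :=
    continuous_erfTaylor.tendsto' 0 1 (by norm_num [erfTaylor])
  refine (isBigO_pow_sub_pow_iff one_ne_zero (by norm_num : 6 ≠ 0) hroot htaylor).1 ?_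
  have hsplit : ∀ x, (base x ^ (-(1 / 6 : ℝ))) ^ 6 - erfTaylor x ^ 6
      = (base x ^ (-(1 / 6 : ℝ))) ^ 6 * (1 - erfTaylor x ^ 6 * base x) := fun x => by
    linear_combination erfTaylor x ^ 6 * base_rpow_pow_six_mul_base x
  simp only [hsplit]
  have hroot_pow : Tendsto (fun x => (base x ^ (-(1 / 6 : ℝ))) ^ 6) (𝓝 0) (𝓝 1) := by
    simpa only [one_pow] using hroot.pow 6
  exact hroot_pow.mul_isBigO one_sub_erfTaylor_pow_six_mul_base

end RootApproximant

open RootApproximant in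
/-- The third-order self-similar root approximant
`K(x) = x (16x⁶/63 + (32x⁴/45 + 4x²/3 + 1)^(3/2))^(-1/6)` reproduces the small-variable
expansion of the error-function integral through fifth order:
`K(x) = x - x³/3 + x⁵/10 + O(x⁷)` as `x → 0`. -/
theorem root_approximant_error_function :
    (fun x : ℝ =>
        x * (16 * x ^ 6 / 63
              + (32 * x ^ 4 / 45 + 4 * x ^ 2 / 3 + 1) ^ ((3 : ℝ) / 2)) ^ (-(1 / 6 : ℝ))
          - (x - x ^ 3 / 3 + x ^ 5 / 10))
      =O[𝓝 0] fun x : ℝ => x ^ 7 := by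
  have hfactor : ∀ x : ℝ, x * (16 * x ^ 6 / 63
        + (32 * x ^ 4 / 45 + 4 * x ^ 2 / 3 + 1) ^ ((3 : ℝ) / 2)) ^ (-(1 / 6 : ℝ))
          - (x - x ^ 3 / 3 + x ^ 5 / 10)
        = x * (base x ^ (-(1 / 6 : ℝ)) - erfTaylor x) := fun x => by
    rw [base, radicand, erfTaylor]; ring
  simp only [hfactor, pow_succ' _ 6]
  exact (isBigO_refl _ _).mul base_rpow_sub_erfTaylor
end

section
/- Large-variable asymptotics of self-similar root approximants: let k ≥ 2, let A ≠ 0, α, s and A_1, …, A_k be real numbers, and define recursively y_1(x) = (1 + A_1 x)^2 + A_2 x^2 and, for 2 ≤ j ≤ k-1, y_j(x) = y_{j-1}(x)^{(j+1)/j} + A_{j+1} x^{j+1}, and the root approximant R_k(x) = A x^{α} · y_{k-1}(x)^{(s-α)/k}. Define constants d_1 = A_1^2 + A_2 and d_j = d_{j-1}^{(j+1)/j} + A_{j+1} for 2 ≤ j ≤ k-1. If d_j > 0 for all 1 ≤ j ≤ k-1 (and, so that all real powers are taken of positive bases, y_j(x) > 0 for all sufficiently large x), then lim_{x→∞} R_k(x)/x^s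 = A · d_{k-1}^{(s-α)/k}; that is, R_k(x) ≃ B_k x^s as x → ∞ with amplitude B_k = A · ((…((A_1^2 + A_2)^{3/2} + A_3)^{4/3} + … + A_k))^{(s-α)/k}. -/
open Filter Topology Real

/-!
Dividing by the natural growth rate turns the recursion for `y_j` into the recursion for `d_j`:
`y_j(x) / x^(j+1) = (y_{j-1}(x) / x^j)^((j+1)/j) + A_{j+1}`, while `y_1(x) / x^2 → A_1^2 + A_2`.
By continuity of `t ↦ t^p`, induction gives `y_j(x) / x^(j+1) → d_j`, and then
`R_k(x) / x^s = A (y_{k-1}(x) / x^k)^((s-α)/k) → A d_{k-1}^((s-α)/k)`; here `d_{k-1} > 0` is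
what makes a possibly negative exponent continuous at the limit.
-/

theorem tendsto_rpow_div_rpow_mul {f : ℝ → ℝ} {a p L : ℝ}
    (hf : ∀ᶠ x in atTop, 0 ≤ f x) (hL : L ≠ 0 ∨ 0 ≤ p)
    (h : Tendsto (fun x => f x / x ^ a) atTop (𝓝 L)) :
    Tendsto (fun x => f x ^ p / x ^ (a * p)) atTop (𝓝 (L ^ p)) := by
  refine ((continuousAt_rpow_const L p hL).tendsto.comp h).congr' ?_
  filter_upwards [hf, eventually_gt_atTop 0] with x hfx hx
  rw [Function.comp_apply, div_rpow hfx (rpow_nonneg hx.le a), ← rpow_mul hx.le]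

theorem tendsto_rpow_div_pow_natCast {f : ℝ → ℝ} {n : ℕ} {p L : ℝ}
    (hf : ∀ᶠ x in atTop, 0 ≤ f x) (hL : L ≠ 0 ∨ 0 ≤ p)
    (h : Tendsto (fun x => f x / x ^ n) atTop (𝓝 L)) :
    Tendsto (fun x => f x ^ p / x ^ (n * p)) atTop (𝓝 (L ^ p)) :=
  tendsto_rpow_div_rpow_mul hf hL (by simpa only [rpow_natCast] using h)

theorem tendsto_rpow_succ_div_add_div_pow_succ {f : ℝ → ℝ} {n : ℕ} (hn : n ≠ 0) {L : ℝ}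
    (c : ℝ) (hf : ∀ᶠ x in atTop, 0 ≤ f x)
    (h : Tendsto (fun x => f x / x ^ n) atTop (𝓝 L)) :
    Tendsto (fun x => (f x ^ (((n : ℝ) + 1) / n) + c * x ^ (n + 1)) / x ^ (n + 1)) atTop
      (𝓝 (L ^ (((n : ℝ) + 1) / n) + c)) := by
  have hexp : (n : ℝ) * (((n : ℝ) + 1) / n) = ((n + 1 : ℕ) : ℝ) := by
    push_cast
    field_simp
  have hpow := tendsto_rpow_div_pow_natCast (p := ((n : ℝ) + 1) / n) hf (Or.inr (by positivity)) h
  refine (hpow.add_const c).congr' ?_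
  filter_upwards [eventually_gt_atTop 0] with x hx
  rw [hexp, rpow_natCast, add_div (f x ^ _), mul_div_cancel_right₀ _ (by positivity)]

theorem tendsto_one_add_mul_sq_add_mul_sq_div_sq (a b : ℝ) :
    Tendsto (fun x : ℝ => ((1 + a * x) ^ 2 + b * x ^ 2) / x ^ 2) atTop (𝓝 (a ^ 2 + b)) := by
  have h : Tendsto (fun x : ℝ => (x⁻¹ + a) ^ 2 + b) atTop (𝓝 ((0 + a) ^ 2 + b)) :=
    ((tendsto_inv_atTop_zero.add_const a).pow 2).add_const b
  rw [zero_add] at h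
  refine h.congr' ?_
  filter_upwards [eventually_gt_atTop 0] with x hx
  field_simp

theorem tendsto_nested_root_div_pow (k : ℕ) (c : ℕ → ℝ) (y : ℕ → ℝ → ℝ) (d : ℕ → ℝ)
    (hy1 : ∀ x : ℝ, y 1 x = (1 + c 1 * x) ^ 2 + c 2 * x ^ 2)
    (hyj : ∀ j : ℕ, 2 ≤ j → j ≤ k - 1 → ∀ x : ℝ,
      y j x = (y (j - 1) x) ^ (((j : ℝ) + 1) / (j : ℝ)) + c (j + 1) * x ^ (j + 1))
    (hd1 : d 1 = (c 1) ^ 2 + c 2)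
    (hdj : ∀ j : ℕ, 2 ≤ j → j ≤ k - 1 →
      d j = (d (j - 1)) ^ (((j : ℝ) + 1) / (j : ℝ)) + c (j + 1))
    (hypos : ∀ j : ℕ, 1 ≤ j → j ≤ k - 1 → ∀ᶠ x : ℝ in atTop, 0 < y j x)
    (j : ℕ) (hj : 1 ≤ j) (hjk : j ≤ k - 1) :
    Tendsto (fun x : ℝ => y j x / x ^ (j + 1)) atTop (𝓝 (d j)) := by
  induction j, hj using Nat.le_induction with
  | base =>
    simpa only [hy1, hd1] using tendsto_one_add_mul_sq_add_mul_sq_div_sq (c 1) (c 2)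
  | succ j hj ih =>
    have hy : ∀ x, y (j + 1) x =
        y j x ^ ((((j + 1 : ℕ) : ℝ) + 1) / (j + 1 : ℕ)) + c (j + 2) * x ^ (j + 2) := by
      simpa only [Nat.add_sub_cancel] using hyj (j + 1) (by omega) hjk
    have hd : d (j + 1) = d j ^ ((((j + 1 : ℕ) : ℝ) + 1) / (j + 1 : ℕ)) + c (j + 2) := by
      simpa only [Nat.add_sub_cancel] using hdj (j + 1) (by omega) hjk
    simp only [hy, hd]
    exact tendsto_rpow_succ_div_add_div_pow_succ j.succ_ne_zero _
      ((hypos j hj (by omega)).mono fun _ hx => hx.le) (ih (by omega))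

theorem root_approximant_large_x_amplitude_general
    (k : ℕ) (hk : 2 ≤ k) (A α s : ℝ)
    (c : ℕ → ℝ) (y : ℕ → ℝ → ℝ) (d : ℕ → ℝ)
    (hy1 : ∀ x : ℝ, y 1 x = (1 + c 1 * x) ^ 2 + c 2 * x ^ 2)
    (hyj : ∀ j : ℕ, 2 ≤ j → j ≤ k - 1 → ∀ x : ℝ,
      y j x = (y (j - 1) x) ^ (((j : ℝ) + 1) / (j : ℝ)) + c (j + 1) * x ^ (j + 1))
    (hd1 : d 1 = (c 1) ^ 2 + c 2)
    (hdj : ∀ j : ℕ, 2 ≤ j → j ≤ k - 1 →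
      d j = (d (j - 1)) ^ (((j : ℝ) + 1) / (j : ℝ)) + c (j + 1))
    (hdpos : ∀ j : ℕ, 1 ≤ j → j ≤ k - 1 → 0 < d j)
    (hypos : ∀ j : ℕ, 1 ≤ j → j ≤ k - 1 → ∀ᶠ x : ℝ in atTop, 0 < y j x) :
    Tendsto (fun x : ℝ => (A * x ^ α * (y (k - 1) x) ^ ((s - α) / (k : ℝ))) / x ^ s)
      atTop (𝓝 (A * (d (k - 1)) ^ ((s - α) / (k : ℝ)))) := by
  have hk1 : 1 ≤ k - 1 := by omega
  have hy_nonneg : ∀ᶠ x in atTop, 0 ≤ y (k - 1) x :=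
    (hypos (k - 1) hk1 le_rfl).mono fun _ hx => hx.le
  have hlim : Tendsto (fun x => y (k - 1) x / x ^ k) atTop (𝓝 (d (k - 1))) := by
    simpa only [Nat.sub_add_cancel (by omega : 1 ≤ k)] using
      tendsto_nested_root_div_pow k c y d hy1 hyj hd1 hdj hypos (k - 1) hk1 le_rfl
  have hroot := tendsto_rpow_div_pow_natCast (p := (s - α) / k) hy_nonneg
    (Or.inl (hdpos (k - 1) hk1 le_rfl).ne') hlim
  refine (hroot.const_mul A).congr' ?_
  filter_upwards [eventually_gt_atTop 0] with x hx
  have hk0 : (k : ℝ) ≠ 0 := by positivity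
  rw [mul_div_cancel₀ _ hk0, rpow_sub hx]
  field_simp

/-- Large-variable asymptotics of self-similar root approximants: for `k ≥ 2`, with
`y₁(x) = (1 + A₁x)² + A₂x²`, `y_j(x) = y_{j-1}(x)^((j+1)/j) + A_{j+1} x^(j+1)` for
`2 ≤ j ≤ k-1`, the root approximant `R_k(x) = A x^α y_{k-1}(x)^((s-α)/k)`, and the nested
constants `d₁ = A₁² + A₂`, `d_j = d_{j-1}^((j+1)/j) + A_{j+1}`, if all `d_j > 0` and
`y_j(x) > 0` for sufficiently large `x`, then
`lim_{x→∞} R_k(x)/x^s = A d_{k-1}^((s-α)/k)`. -/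
theorem root_approximant_large_x_amplitude
    (k : ℕ) (hk : 2 ≤ k) (A α s : ℝ) (hA : A ≠ 0)
    (c : ℕ → ℝ) (y : ℕ → ℝ → ℝ) (d : ℕ → ℝ)
    (hy1 : ∀ x : ℝ, y 1 x = (1 + c 1 * x) ^ 2 + c 2 * x ^ 2)
    (hyj : ∀ j : ℕ, 2 ≤ j → j ≤ k - 1 → ∀ x : ℝ,
      y j x = (y (j - 1) x) ^ (((j : ℝ) + 1) / (j : ℝ)) + c (j + 1) * x ^ (j + 1))
    (hd1 : d 1 = (c 1) ^ 2 + c 2)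
    (hdj : ∀ j : ℕ, 2 ≤ j → j ≤ k - 1 →
      d j = (d (j - 1)) ^ (((j : ℝ) + 1) / (j : ℝ)) + c (j + 1))
    (hdpos : ∀ j : ℕ, 1 ≤ j → j ≤ k - 1 → 0 < d j)
    (hypos : ∀ j : ℕ, 1 ≤ j → j ≤ k - 1 → ∀ᶠ x : ℝ in atTop, 0 < y j x) :
    Tendsto (fun x : ℝ => (A * x ^ α * (y (k - 1) x) ^ ((s - α) / (k : ℝ))) / x ^ s)
      atTop (𝓝 (A * (d (k - 1)) ^ ((s - α) / (k : ℝ)))) :=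
  root_approximant_large_x_amplitude_general k hk A α s c y d hy1 hyj hd1 hdj hdpos hypos
end
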